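/- arXiv:2208.05740 — 2 statements merged into one kernel-verified Lean document; each statement's English description precedes it below -/
import Mathlib

section
/- Let u ≥ 0, l ≤ 0 with u > l, let C ≥ 0 and q be real numbers. Define g(π, γ) = -max(0, uγ + lπ + q) + lπ on the set {(π, γ) : π ≥ 0, γ ≥ 0, π + γ = C}. Then the maximum of g over this set equals: l·π* if -uC ≤ q ≤ -lC; 0 if q < -uC; and -q if q > -lC, where π* = max(min((uC + q)/(u - l), C), 0). -/
/-!
Since `-max 0 a + b = min b (b - a)`, the ReLU term cancels `l * π` and
`g π γ = min (l * π) (-u * γ - q)`. On the segment `π + γ = C` the first argument is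
nonincreasing in `π` and the second nondecreasing, so the minimum is largest where they cross,
at `π = (u * C + q) / (u - l)`. The conditions on `q` say whether this crossing lies in
`[0, C]`; if not, the maximum sits at the corresponding endpoint.
-/

theorem neg_max_zero_add_eq_min (a b : ℝ) : -max 0 a + b = min b (b - a) := by
  rw [neg_add_eq_sub, ← min_sub_sub_left, sub_zero]

def simplexImage (C : ℝ) (F : ℝ → ℝ → ℝ) : Set ℝ :=
  {v | ∃ π γ, 0 ≤ π ∧ 0 ≤ γ ∧ π + γ = C ∧ v = F π γ}

theorem isGreatest_simplexImage {C m π₀ γ₀ : ℝ} {F : ℝ → ℝ → ℝ}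
    (hπ₀ : 0 ≤ π₀) (hγ₀ : 0 ≤ γ₀) (hsum : π₀ + γ₀ = C) (hm : F π₀ γ₀ = m)
    (hle : ∀ π γ, 0 ≤ π → 0 ≤ γ → π + γ = C → F π γ ≤ m) :
    IsGreatest (simplexImage C F) m := by
  refine ⟨⟨π₀, γ₀, hπ₀, hγ₀, hsum, hm.symm⟩, ?_⟩
  rintro _ ⟨π, γ, hπ, hγ, hπγ, rfl⟩
  exact hle π γ hπ hγ hπγ

section

variable {u l C q : ℝ}

theorem crossing_mem_Icc (hul : l < u) (hlow : -u * C ≤ q) (hhigh : q ≤ -l * C) :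
    (u * C + q) / (u - l) ∈ Set.Icc 0 C := by
  have hul' : 0 < u - l := sub_pos.2 hul
  refine ⟨div_nonneg (by linarith) hul'.le, ?_⟩
  rw [div_le_iff₀ hul']
  linarith

theorem isGreatest_min_at_crossing (hu : 0 ≤ u) (hl : l ≤ 0) (hul : l < u)
    (hlow : -u * C ≤ q) (hhigh : q ≤ -l * C) :
    IsGreatest (simplexImage C fun π γ => min (l * π) (-u * γ - q))
      (l * ((u * C + q) / (u - l))) := by
  set p := (u * C + q) / (u - l)
  have hcross : (u - l) * p = u * C + q := mul_div_cancel₀ _ (sub_pos.2 hul).ne'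
  obtain ⟨hp₀, hpC⟩ := crossing_mem_Icc hul hlow hhigh
  have hval : -u * (C - p) - q = l * p := by linarith
  refine isGreatest_simplexImage hp₀ (sub_nonneg.2 hpC) (add_sub_cancel p C) ?_ ?_
  · rw [hval, min_self]
  · intro π γ _ _ hsum
    rcases le_total π p with hπp | hpπ
    · calc min (l * π) (-u * γ - q) ≤ -u * γ - q := min_le_right _ _
        _ ≤ -u * (C - p) - q := by nlinarith
        _ = l * p := hval
    · calc min (l * π) (-u * γ - q) ≤ l * π := min_le_left _ _
        _ ≤ l * p := mul_le_mul_of_nonpos_left hpπ hl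

theorem isGreatest_min_of_lt_neg_mul (hl : l ≤ 0) (hC : 0 ≤ C) (hq : q < -u * C) :
    IsGreatest (simplexImage C fun π γ => min (l * π) (-u * γ - q)) 0 := by
  refine isGreatest_simplexImage le_rfl hC (zero_add C) ?_ ?_
  · rw [mul_zero]
    exact min_eq_left (by linarith)
  · intro π γ hπ _ _
    exact (min_le_left _ _).trans (mul_nonpos_of_nonpos_of_nonneg hl hπ)

theorem isGreatest_min_of_neg_mul_lt (hu : 0 ≤ u) (hC : 0 ≤ C) (hq : -l * C < q) :
    IsGreatest (simplexImage C fun π γ => min (l * π) (-u * γ - q)) (-q) := by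
  refine isGreatest_simplexImage hC le_rfl (add_zero C) ?_ ?_
  · rw [mul_zero, zero_sub]
    exact min_eq_right (by linarith)
  · intro π γ _ hγ _
    exact (min_le_right _ _).trans (by nlinarith)

end

theorem gcp_crown_lemma_A1
    (u l C q : ℝ) (hu : 0 ≤ u) (hl : l ≤ 0) (hul : l < u) (hC : 0 ≤ C)
    (g : ℝ → ℝ → ℝ) (hg : ∀ π γ, g π γ = -max 0 (u * γ + l * π + q) + l * π)
    (S : Set ℝ) (hS : S = {v | ∃ π γ, 0 ≤ π ∧ 0 ≤ γ ∧ π + γ = C ∧ v = g π γ})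
    (πstar : ℝ) (hπ : πstar = max (min ((u * C + q) / (u - l)) C) 0) :
    (-u * C ≤ q → q ≤ -l * C → IsGreatest S (l * πstar)) ∧
    (q < -u * C → IsGreatest S 0) ∧
    (-l * C < q → IsGreatest S (-q)) := by
  have hg_min : g = fun π γ => min (l * π) (-u * γ - q) := by
    funext π γ
    rw [hg, neg_max_zero_add_eq_min]
    congr 1
    ring
  have hS_image : S = simplexImage C fun π γ => min (l * π) (-u * γ - q) := by
    rw [hS, ← hg_min]
    rfl
  rw [hS_image]
  refine ⟨fun hlow hhigh => ?_, isGreatest_min_of_lt_neg_mul hl hC,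
    isGreatest_min_of_neg_mul_lt hu hC⟩
  obtain ⟨hp₀, hpC⟩ := crossing_mem_Icc hul hlow hhigh
  rw [hπ, min_eq_left hpC, max_eq_left hp₀]
  exact isGreatest_min_at_crossing hu hl hul hlow hhigh
end

section
/- Let u ≥ 0, l ≤ 0 with u > l, C ≥ 0, q ∈ ℝ, and define g(π, γ) = -max(0, uγ + lπ + q) + lπ. For every π, γ with π ≥ 0, γ ≥ 0 and π + γ = C, if -uC ≤ q ≤ -lC then g(π, γ) ≤ l·max(min((uC + q)/(u - l), C), 0). -/
theorem gcp_crown_upper_bound_middle_case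
    (u l C q : ℝ) (hu : 0 ≤ u) (hl : l ≤ 0) (hul : l < u) (hC : 0 ≤ C)
    (π γ : ℝ) (hπ : 0 ≤ π) (hγ : 0 ≤ γ) (hsum : π + γ = C)
    (hq1 : -u * C ≤ q) (hq2 : q ≤ -l * C) :
    -max 0 (u * γ + l * π + q) + l * π ≤
      l * max (min ((u * C + q) / (u - l)) C) 0 := by
  have hul' : (0:ℝ) < u - l := by linarith
  set t := (u * C + q) / (u - l) with htdef
  have ht : (u - l) * t = u * C + q := by
    rw [htdef, mul_div_assoc']
    exact mul_div_cancel_left₀ _ (ne_of_gt hul')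
  have ht0 : 0 ≤ t := div_nonneg (by linarith) (by linarith)
  have hmax : max (min t C) 0 = min t C := max_eq_left (le_min ht0 hC)
  rw [hmax]
  rcases le_total (u * γ + l * π + q) 0 with h | h
  · rw [max_eq_left h]
    have hπt : t ≤ π := by nlinarith [ht]
    have hm : min t C ≤ π := le_trans (min_le_left t C) hπt
    nlinarith [mul_le_mul_of_nonpos_left hm hl]
  · rw [max_eq_right h]
    have hπt : π ≤ t := by nlinarith [ht]
    have hπC : π ≤ C := by linarith
    have hm : π ≤ min t C := le_min hπt hπC
    nlinarith [mul_le_mul_of_nonneg_left hm hu,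
      mul_le_mul_of_nonneg_left (min_le_left t C) (le_of_lt hul'), ht]
end
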